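/- arXiv:2511.22658 — 2 statements merged into one kernel-verified Lean document; each statement's English description precedes it below -/
import Mathlib

section
/- Let G be a group containing a torsion-free abelian normal subgroup M of finite index, and suppose the conjugation action of G/M on M is faithful. Then every abelian subgroup of finite index in G is contained in M. -/
/-!
Let `g ∈ A` and `m ∈ M`. Since `A` has finite index, some power `m ^ n` with `n > 0` lies in `A`,
so `g` commutes with `m ^ n`, i.e. `(g * m * g⁻¹) ^ n = m ^ n`. Both `g * m * g⁻¹` and `m` lie in
the torsion-free abelian group `M`, where `n`-th roots are unique, so `g` centralizes `M` and hence
lies in `M` by faithfulness.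
-/

theorem Subgroup.eq_of_pow_eq_pow_of_mem {G : Type*} [Group G] {M : Subgroup G}
    (hMab : ∀ a b : M, a * b = b * a)
    (hMtf : ∀ g ∈ M, ∀ n : ℕ, n ≠ 0 → g ^ n = 1 → g = 1)
    {x y : G} (hx : x ∈ M) (hy : y ∈ M) {n : ℕ} (hn : n ≠ 0) (h : x ^ n = y ^ n) : x = y := by
  have hxy : Commute x y⁻¹ := congrArg Subtype.val (hMab ⟨x, hx⟩ ⟨y⁻¹, M.inv_mem hy⟩)
  refine mul_inv_eq_one.mp (hMtf _ (M.mul_mem hx (M.inv_mem hy)) n hn ?_)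
  rw [hxy.mul_pow, inv_pow, h, mul_inv_cancel]

theorem stmt6_general (G : Type) [Group G] (M : Subgroup G) [M.Normal]
    (hMab : ∀ a b : M, a * b = b * a)
    (hMtf : ∀ g ∈ M, ∀ n : ℕ, n ≠ 0 → g ^ n = 1 → g = 1)
    (hfaithful : ∀ g : G, (∀ m ∈ M, g * m * g⁻¹ = m) → g ∈ M)
    (A : Subgroup G) (hAfi : A.FiniteIndex) (hAab : ∀ a b : A, a * b = b * a) :
    A ≤ M := by
  intro g hg
  refine hfaithful g fun m hm ↦ ?_
  obtain ⟨n, hn, -, hmn⟩ := A.exists_pow_mem_of_index_ne_zero hAfi.index_ne_zero m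
  have hcomm : Commute g (m ^ n) := congrArg Subtype.val (hAab ⟨g, hg⟩ ⟨m ^ n, hmn⟩)
  refine Subgroup.eq_of_pow_eq_pow_of_mem hMab hMtf (Subgroup.Normal.conj_mem ‹_› m hm g) hm
    hn.ne' ?_
  rw [conj_pow, hcomm.eq, mul_inv_cancel_right]

/-- If `M` is a torsion-free abelian normal subgroup of finite index in `G` on which the
conjugation action of `G/M` is faithful, then every abelian finite-index subgroup of `G` is
contained in `M`. -/
theorem stmt6 (G : Type) [Group G] (M : Subgroup G) [M.Normal]
    (hMab : ∀ a b : M, a * b = b * a)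
    (hMtf : ∀ g ∈ M, ∀ n : ℕ, n ≠ 0 → g ^ n = 1 → g = 1)
    (hMfi : M.FiniteIndex)
    (hfaithful : ∀ g : G, (∀ m ∈ M, g * m * g⁻¹ = m) → g ∈ M)
    (A : Subgroup G) (hAfi : A.FiniteIndex) (hAab : ∀ a b : A, a * b = b * a) :
    A ≤ M :=
  stmt6_general G M hMab hMtf hfaithful A hAfi hAab
end

section
/- Let G be a finite group, M a finitely generated free abelian group, and ψ, ψ' : G → Aut(M) two injective homomorphisms, giving semidirect products E = M ⋊_ψ G and E' = M ⋊_{ψ'} G. Then E and E' are isomorphic as groups if and only if there exist an automorphism β of G and an isomorphism φ : M → M of abelian groups such that φ(ψ(x)(m)) = ψ'(β(x))(φ(m)) for all x ∈ G and m ∈ M. -/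
/-!
For finite `G` every `x ∈ N ⋊ G` has `x ^ |G| ∈ N`, so an isomorphism
`f : N ⋊[φ] G ≃* N' ⋊[φ'] G'` maps `N` into the centralizer of the `|G|`-th powers of `N'`.
If `φ'` is faithful and `N'` is torsion-free, that centralizer is `N'`: an `x` centralizing it has
`(φ' x.right n) ^ |G| = n ^ |G|` for all `n`, so `φ' x.right = 1`. Hence `f` restricts to
`N ≃* N'` and induces `G ≃* G'`, and conjugating `inl n` by `inr g` shows that this pair
intertwines the actions. Conversely an intertwining pair gives `SemidirectProduct.congr`.
-/

/-- The multiplicative group structure that `AddAut A` carried in the older Mathlib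
(`e₁ * e₂ = e₂.trans e₁`); Mathlib now gives `AddAut A` an additive group structure instead. -/
instance addAutGroupOld (A : Type*) [Add A] : Group (AddAut A) where
  mul g h := AddEquiv.trans h g
  one := AddEquiv.refl _
  inv := AddEquiv.symm
  mul_assoc _ _ _ := rfl
  one_mul _ := rfl
  mul_one _ := rfl
  inv_mul_cancel := AddEquiv.self_trans_symm

/-- The canonical homomorphism from additive automorphisms of `M` to multiplicative
automorphisms of `Multiplicative M`. -/
def addAutToMulAut (M : Type*) [AddCommGroup M] : AddAut M →* MulAut (Multiplicative M) where
  toFun a := AddEquiv.toMultiplicative a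
  map_one' := by ext x; rfl
  map_mul' a b := by ext x; rfl

namespace SemidirectProduct

section Group

variable {N G : Type*} [Group N] [Group G] {φ : G →* MulAut N}

theorem inl_left_of_right_eq_one {x : N ⋊[φ] G} (hx : x.right = 1) : inl x.left = x := by
  simpa [hx] using inl_left_mul_inr_right x

theorem pow_card_mem_range_inl [Finite G] (x : N ⋊[φ] G) :
    x ^ Nat.card G ∈ (inl : N →* N ⋊[φ] G).range := by
  rw [range_inl_eq_ker_rightHom, MonoidHom.mem_ker, map_pow, pow_card_eq_one']

end Group

section CommGroup

variable {N G : Type*} [CommGroup N] [Group G] {φ : G →* MulAut N}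

theorem mul_inl_mul_inv (x : N ⋊[φ] G) (n : N) : x * inl n * x⁻¹ = inl (φ x.right n) := by
  ext
  · simp only [mul_left, inv_left, left_inl, mul_right, right_inl, mul_one, ← MulAut.mul_apply,
      ← map_mul, mul_inv_cancel, map_one, MulAut.one_apply]
    rw [mul_comm x.left, mul_inv_cancel_right]
  · simp

theorem right_eq_one_of_commute_inl_pow [IsMulTorsionFree N] (hφ : Function.Injective φ)
    {k : ℕ} (hk : k ≠ 0) {x : N ⋊[φ] G} (hx : ∀ n, Commute x (inl (n ^ k))) : x.right = 1 := by
  suffices φ x.right = 1 from hφ (by rw [this, map_one])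
  ext n
  have hfix : φ x.right (n ^ k) = n ^ k := by
    rw [← inl_inj (φ := φ), ← mul_inl_mul_inv, (hx n).eq, mul_inv_cancel_right]
  exact pow_left_injective hk (by simpa using hfix)

end CommGroup

section Finite

variable {N G N' G' : Type*} [CommGroup N] [Group G] [Finite G] [CommGroup N'] [Group G']
  [IsMulTorsionFree N'] {φ : G →* MulAut N} {φ' : G' →* MulAut N'}

theorem right_apply_inl_eq_one (hφ' : Function.Injective φ') (f : N ⋊[φ] G ≃* N' ⋊[φ'] G')
    (n : N) : (f (inl n)).right = 1 := by
  refine right_eq_one_of_commute_inl_pow hφ' (Nat.card_pos (α := G)).ne' fun n' ↦ ?_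
  obtain ⟨a, ha⟩ := pow_card_mem_range_inl (f.symm (inl n'))
  have hfa : f (inl a) = inl (n' ^ Nat.card G) := by
    rw [ha, map_pow, MulEquiv.apply_symm_apply, map_pow]
  rw [← hfa]
  exact ((Commute.all n a).map inl).map f

end Finite

section MulEquiv

variable {N G N' G' : Type*} [Group N] [Group G] [Group N'] [Group G']
  {φ : G →* MulAut N} {φ' : G' →* MulAut N'}

theorem right_symm_inr_right (f : N ⋊[φ] G ≃* N' ⋊[φ'] G')
    (hf : ∀ n, (f.symm (inl n)).right = 1) (x : N ⋊[φ] G) :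
    (f.symm (inr (f x).right)).right = x.right := by
  have hx : inr (f x).right = (inl (f x).left)⁻¹ * f x := by
    rw [eq_inv_mul_iff_mul_eq, inl_left_mul_inr_right]
  rw [hx, map_mul, map_inv, MulEquiv.symm_apply_apply, mul_right, inv_right, hf, inv_one, one_mul]

variable (f : N ⋊[φ] G ≃* N' ⋊[φ'] G') (hf : ∀ n, (f (inl n)).right = 1)
  (hf' : ∀ n, (f.symm (inl n)).right = 1)

def leftEquiv : N ≃* N' where
  toFun n := (f (inl n)).left
  invFun n' := (f.symm (inl n')).left
  left_inv n := by simp only [inl_left_of_right_eq_one (hf n), MulEquiv.symm_apply_apply, left_inl]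
  right_inv n' := by
    simp only [inl_left_of_right_eq_one (hf' n'), MulEquiv.apply_symm_apply, left_inl]
  map_mul' a b := by simp [mul_left, hf a]

def rightEquiv : G ≃* G' where
  toFun g := (f (inr g)).right
  invFun g' := (f.symm (inr g')).right
  left_inv g := right_symm_inr_right f hf' (inr g)
  right_inv g' := right_symm_inr_right f.symm hf (inr g')
  map_mul' a b := by simp [mul_right]

theorem inl_leftEquiv (n : N) : inl (leftEquiv f hf hf' n) = f (inl n) :=
  inl_left_of_right_eq_one (hf n)

end MulEquiv

theorem leftEquiv_apply_aut {N G N' G' : Type*} [Group N] [Group G] [CommGroup N'] [Group G']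
    {φ : G →* MulAut N} {φ' : G' →* MulAut N'} (f : N ⋊[φ] G ≃* N' ⋊[φ'] G')
    (hf : ∀ n, (f (inl n)).right = 1) (hf' : ∀ n, (f.symm (inl n)).right = 1) (g : G) (n : N) :
    leftEquiv f hf hf' (φ g n) = φ' (rightEquiv f hf hf' g) (leftEquiv f hf hf' n) := by
  apply inl_injective (φ := φ')
  rw [inl_leftEquiv, inl_aut, map_mul, map_mul, map_inv, map_inv, ← inl_leftEquiv f hf hf',
    mul_inl_mul_inv]
  rfl

theorem nonempty_mulEquiv_iff_of_injective {N G N' G' : Type*} [CommGroup N] [Group G] [Finite G]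
    [IsMulTorsionFree N] [CommGroup N'] [Group G'] [Finite G'] [IsMulTorsionFree N']
    {φ : G →* MulAut N} {φ' : G' →* MulAut N'}
    (hφ : Function.Injective φ) (hφ' : Function.Injective φ') :
    Nonempty (N ⋊[φ] G ≃* N' ⋊[φ'] G') ↔
      ∃ (β : G ≃* G') (Φ : N ≃* N'), ∀ g n, Φ (φ g n) = φ' (β g) (Φ n) := by
  constructor
  · rintro ⟨f⟩
    have hf := right_apply_inl_eq_one hφ' f
    have hf' := right_apply_inl_eq_one hφ f.symm
    exact ⟨rightEquiv f hf hf', leftEquiv f hf hf', leftEquiv_apply_aut f hf hf'⟩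
  · rintro ⟨β, Φ, h⟩
    exact ⟨congr Φ β fun g ↦ MulEquiv.ext (h g)⟩

end SemidirectProduct

theorem injective_addAutToMulAut_comp {G M : Type*} [Group G] [AddCommGroup M] {ψ : G →* AddAut M}
    (hψ : Function.Injective ψ) : Function.Injective ((addAutToMulAut M).comp ψ) :=
  AddEquiv.toMultiplicative.injective.comp hψ

theorem stmt10_general (G M : Type) [Group G] [Finite G] [AddCommGroup M]
    [Module.Free ℤ M]
    (ψ ψ' : G →* AddAut M) (hψ : Function.Injective ψ) (hψ' : Function.Injective ψ') :
    Nonempty ((Multiplicative M ⋊[(addAutToMulAut M).comp ψ] G) ≃*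
        (Multiplicative M ⋊[(addAutToMulAut M).comp ψ'] G)) ↔
      ∃ (β : G ≃* G) (φ : M ≃+ M), ∀ (x : G) (m : M), φ (ψ x m) = ψ' (β x) (φ m) := by
  have : IsAddTorsionFree M := .of_isTorsionFree ℤ M
  rw [SemidirectProduct.nonempty_mulEquiv_iff_of_injective
    (injective_addAutToMulAut_comp hψ) (injective_addAutToMulAut_comp hψ')]
  constructor
  · rintro ⟨β, Φ, h⟩
    exact ⟨β, AddEquiv.toMultiplicative.symm Φ, fun x m ↦ h x (.ofAdd m)⟩
  · rintro ⟨β, φ, h⟩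
    exact ⟨β, AddEquiv.toMultiplicative φ, fun x m ↦ congrArg Multiplicative.ofAdd (h x m.toAdd)⟩

/-- For a finite group `G`, a finitely generated free abelian group `M` and faithful actions
`ψ, ψ' : G → Aut(M)`, the semidirect products `M ⋊_ψ G` and `M ⋊_{ψ'} G` are isomorphic iff
there are `β ∈ Aut(G)` and `φ ∈ Aut(M)` with `φ(ψ(x)(m)) = ψ'(β(x))(φ(m))` for all `x, m`. -/
theorem stmt10 (G M : Type) [Group G] [Finite G] [AddCommGroup M]
    [Module.Free ℤ M] [Module.Finite ℤ M]
    (ψ ψ' : G →* AddAut M) (hψ : Function.Injective ψ) (hψ' : Function.Injective ψ') :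
    Nonempty ((Multiplicative M ⋊[(addAutToMulAut M).comp ψ] G) ≃*
        (Multiplicative M ⋊[(addAutToMulAut M).comp ψ'] G)) ↔
      ∃ (β : G ≃* G) (φ : M ≃+ M), ∀ (x : G) (m : M), φ (ψ x m) = ψ' (β x) (φ m) :=
  stmt10_general G M ψ ψ' hψ hψ'
end
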